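/- Let n ∈ ℕ, let S and T be trees, and let P be a branch of S such that bh(P) ≤ th(T), lh(P) ≥ dim(T), and either (n > th(T) and n ≤ lh(P)) or n ≥ lh(P). Then the n-boundary commutes with insertion: ∂_n(S)≪∂_n(P), ∂_n(T)≫ = ∂_n(S≪P,T≫), and for each ε ∈ {−,+} the boundary inclusions satisfy δ_n^ε(S) ∘ κ_{S,P,T} ≡^max κ_{∂_n S, ∂_n P, ∂_n T} ∘ δ_n^ε(S≪P,T≫). -/

import Mathlib

section NaturalOps

universe u

/-- Natural (Hessenberg) addition of ordinals, as in the older Mathlib's `Ordinal.nadd`. -/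
noncomputable def Ordinal.nadd (a b : Ordinal.{u}) : Ordinal.{u} :=
  max (Ordinal.blsub.{u, u} a fun a' h => Ordinal.nadd a' b)
    (Ordinal.blsub.{u, u} b fun b' h => Ordinal.nadd a b')
termination_by (a, b)
decreasing_by
  · exact Prod.Lex.left _ _ h
  · exact Prod.Lex.right _ h

notation:65 a:65 " ♯ " b:66 => Ordinal.nadd a b

end NaturalOps

namespace Catt

/-! ### Finite planar rooted trees -/

abbrev Path := List ℕ

inductive Tree : Type
  | node : List Tree → Tree

/-- The list of child subtrees. -/
def Tree.children : Tree → List Tree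
  | .node ts => ts

/-- Trunk height. -/
def Tree.th : Tree → ℕ
  | .node [t] => t.th + 1
  | _ => 0

/-- Dimension of a tree. -/
def Tree.dim : Tree → ℕ
  | .node [] => 0
  | .node (t :: ts) => max (t.dim + 1) (Tree.dim (.node ts))

/-- A tree is linear when its trunk height equals its dimension. -/
def Tree.linear (T : Tree) : Prop := T.th = T.dim

/-- The linear tree of dimension `n` (the `n`-disc). -/
def discTree : ℕ → Tree
  | 0 => .node []
  | n + 1 => .node [discTree n]

/-- Suspension of a tree. -/
def Tree.susp (T : Tree) : Tree := .node [T]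

/-- Subtree of `T` indexed by a list of naturals. -/
def Tree.subtree : List ℕ → Tree → Tree
  | [], T => T
  | k :: P, T => Tree.subtree P (T.children.getD k (.node []))

/-- Validity of a variable path in (the pasting context generated by) a tree:
a path `k₁ :: ⋯ :: kᵣ :: [j]` descends through children `kᵢ` and ends in the
`j`-th 0-dimensional endpoint of the resulting node. -/
inductive IsPath : Tree → Path → Prop
  | point (ts : List Tree) (j : ℕ) : j ≤ ts.length → IsPath (.node ts) [j]
  | deeper (ts : List Tree) (k : ℕ) (p : Path) : k < ts.length →
      IsPath (ts.getD k (.node [])) p → IsPath (.node ts) (k :: p)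

/-- Paths of locally maximal variables. -/
inductive IsMaxPath : Tree → Path → Prop
  | here : IsMaxPath (.node []) [0]
  | there (ts : List Tree) (k : ℕ) (p : Path) : k < ts.length →
      IsMaxPath (ts.getD k (.node [])) p → IsMaxPath (.node ts) (k :: p)

/-- A branch of a tree: a non-empty index list whose subtree is linear. -/
inductive IsBranch : Tree → List ℕ → Prop
  | here (ts : List Tree) (k : ℕ) : k < ts.length → (ts.getD k (.node [])).linear →
      IsBranch (.node ts) [k]
  | there (ts : List Tree) (k : ℕ) (P : List ℕ) : k < ts.length → P ≠ [] →
      IsBranch (ts.getD k (.node [])) P → IsBranch (.node ts) (k :: P)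

/-- The path of the unique locally maximal variable of a linear tree. -/
def Tree.maxPath : Tree → Path
  | .node [] => [0]
  | .node (t :: _) => 0 :: t.maxPath

/-- The locally maximal variable `⌊P⌋` corresponding to a branch `P` of `S`. -/
def branchVar : List ℕ → Tree → Path
  | [], S => S.maxPath
  | [k], S => k :: (S.children.getD k (.node [])).maxPath
  | k :: P, S => k :: branchVar P (S.children.getD k (.node []))

/-- Branch height `bh(P)`. -/
def bh (P : List ℕ) : ℕ := P.length - 1

/-- Leaf height `lh(P)`, the dimension of `⌊P⌋`. -/
def lh (P : List ℕ) (S : Tree) : ℕ := (branchVar P S).length - 1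

/-- The inserted tree `S ≪ P , T ≫`. -/
def insTree : List ℕ → Tree → Tree → Tree
  | [], S, _ => S
  | [k], S, T => .node (S.children.take k ++ T.children ++ S.children.drop (k + 1))
  | k :: P, S, T =>
      .node (S.children.take k ++
        [insTree P (S.children.getD k (.node [])) (T.children.headD (.node []))] ++
        S.children.drop (k + 1))

/-- The branch of `S ≪ P , T ≫` induced by a branch `Q` of `T`. -/
def insBranch : List ℕ → List ℕ → List ℕ
  | [], Q => Q
  | [k], q :: Q => (q + k) :: Q
  | [k], [] => [k]
  | k :: P, Q => k :: insBranch P (Q.drop 1)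

/-- The boundary `∂ₙ` of a tree (truncation at depth `n`). -/
def Tree.bdry : ℕ → Tree → Tree
  | 0, _ => .node []
  | _ + 1, .node [] => .node []
  | n + 1, .node (t :: ts) => .node (Tree.bdry n t :: (Tree.bdry (n + 1) (.node ts)).children)

/-! ### Syntax of Catt -/

mutual
inductive Ty : Type
  | star : Ty
  | arr : Tm → Ty → Tm → Ty
inductive Tm : Type
  | var : Path → Tm
  | coh : Tree → Ty → (Path → Tm) → Tm
end

/-- A substitution assigns a term to each variable (path). -/
abbrev Sub := Path → Tm

/-- Contexts: named contexts whose variable names are paths. -/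
abbrev Ctx := List (Path × Ty)

def Ty.dim : Ty → ℕ
  | .star => 0
  | .arr _ A _ => A.dim + 1

def Tm.dim : Tm → ℕ
  | .var p => p.length - 1
  | .coh _ A _ => A.dim

/-- Applying a substitution to a term. -/
def Tm.sub : Tm → Sub → Tm
  | .var p, σ => σ p
  | .coh T A τ, σ => .coh T A (fun p => (τ p).sub σ)

/-- Applying a substitution to a type. -/
def Ty.sub : Ty → Sub → Ty
  | .star, _ => .star
  | .arr s A t, σ => .arr (s.sub σ) (A.sub σ) (t.sub σ)

/-- Composition of substitutions, diagrammatic order: `(σ.comp τ) = σ` followed by `τ`. -/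
def Sub.comp (σ τ : Sub) : Sub := fun p => (σ p).sub τ

/-- The identity substitution. -/
def Sub.id : Sub := fun p => .var p

/-! ### Suspension -/

mutual
/-- Suspension of a term. -/
def Tm.susp : Tm → Tm
  | .var p => .var (0 :: p)
  | .coh T A σ => .coh T.susp A.susp (fun p => match p with
      | [j] => .var [j]
      | 0 :: q => (σ q).susp
      | _ => .var p)
/-- Suspension of a type. -/
def Ty.susp : Ty → Ty
  | .star => .arr (.var [0]) .star (.var [1])
  | .arr s A t => .arr s.susp A.susp t.susp
end

/-- Suspension of a substitution. -/
def suspSub (σ : Sub) : Sub := fun p => match p with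
  | [j] => .var [j]
  | 0 :: q => (σ q).susp
  | _ => .var p

/-- Suspension of a context. -/
def ctxSusp (Γ : Ctx) : Ctx :=
  ([0], .star) :: ([1], .star) :: Γ.map (fun e => (0 :: e.1, e.2.susp))

/-- The substitution renaming a suspended term into the `k`-th wedge component
of a tree: `N ↦ [k]`, `S ↦ [k+1]`, `0 :: q ↦ k :: q`. -/
def compSub (k : ℕ) : Sub := fun p => match p with
  | [j] => .var [j + k]
  | 0 :: q => .var (k :: q)
  | _ => .var p

/-- The substitution including a tree as `m` consecutive wedge components
starting at offset `k`. -/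
def wedgeShift (k : ℕ) : Sub := fun p => match p with
  | j :: q => .var ((j + k) :: q)
  | [] => .var []

/-- The type of the variable at path `p` in the pasting context of a tree. -/
def pathType : Path → Tree → Ty
  | [], _ => .star
  | [_], _ => .star
  | k :: p, S => ((pathType p (S.children.getD k (.node []))).susp).sub (compSub k)

/-- All variable paths of a tree, with an offset for the 0-dimensional endpoints. -/
def treePathsAux : Tree → ℕ → List Path
  | .node [], k => [[k]]
  | .node (t :: ts), k =>
      [k] :: (treePathsAux t 0).map (k :: ·) ++ treePathsAux (.node ts) (k + 1)

/-- All variable paths of a tree. -/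
def treePaths (T : Tree) : List Path := treePathsAux T 0

/-- The pasting context `⌊T⌋` generated by a tree. -/
def treeCtx (T : Tree) : Ctx := (treePaths T).map (fun p => (p, pathType p T))

/-! ### Disc substitutions and unbiased constructions -/

/-- The list of source/target pairs of a type, lowest dimension first. -/
def Ty.srcs : Ty → List (Tm × Tm)
  | .star => []
  | .arr s A t => A.srcs ++ [(s, t)]

/-- The substitution `{A, u} : D^{dim A} → Γ` from a disc determined by a type
and a term. -/
def discSub (A : Ty) (u : Tm) : Sub := fun p =>
  let L := A.srcs
  let k := p.length - 1
  if k < L.length then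
    (if p.getLastD 0 = 0 then (L.getD k (u, u)).1 else (L.getD k (u, u)).2)
  else u

/-- The boundary inclusion `δₙᵉ : ∂ₙ T → T` (`ε = false` is the source). -/
def incl (ε : Bool) : ℕ → Tree → Sub
  | 0, T => fun _ => if ε then .var [T.children.length] else .var [0]
  | n + 1, T => fun p => match p with
      | [] => .var []
      | [j] => .var [j]
      | i :: q => ((incl ε n (T.children.getD i (.node []))) q).susp.sub (compSub i)

open Classical in
mutual
/-- The unbiased type `𝒰_T^n`. -/
noncomputable def unbiasedType : Tree → ℕ → Ty
  | _, 0 => .star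
  | T, n + 1 =>
      .arr ((unbiasedTm (Tree.bdry n T) n).sub (incl false n T))
           (unbiasedType T n)
           ((unbiasedTm (Tree.bdry n T) n).sub (incl true n T))
termination_by T n => 2 * n
/-- The unbiased term `𝒯_T^n`. -/
noncomputable def unbiasedTm : Tree → ℕ → Tm
  | T, n =>
      if T = discTree n then .var T.maxPath
      else .coh T (unbiasedType T n) (fun p => .var p)
termination_by T n => 2 * n + 1
end

/-- The unbiased coherence `𝒞_T^n`. -/
noncomputable def unbiasedCoh (T : Tree) (n : ℕ) : Tm :=
  .coh T (unbiasedType T n) (fun p => .var p)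

/-- The identity coherence `𝟙` on a term `u` of type `A`. -/
noncomputable def idCoh (A : Ty) (u : Tm) : Tm :=
  (unbiasedCoh (discTree A.dim) (A.dim + 1)).sub (discSub A u)

/-! ### Insertion -/

/-- The interior substitution `ι : T → S ≪ P , T ≫`. -/
def iota : List ℕ → Tree → Tree → Sub
  | [], _, _ => fun p => .var p
  | [k], _, _ => wedgeShift k
  | k :: P, S, T => fun p =>
      ((suspSub (iota P (S.children.getD k (.node [])) (T.children.headD (.node [])))) p).sub
        (compSub k)

/-- The exterior substitution `κ : S → S ≪ P , T ≫`. -/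
noncomputable def kappa : List ℕ → Tree → Tree → Sub
  | [], _, _ => fun p => .var p
  | [k], S, T =>
      let m := T.children.length
      let n := (S.children.getD k (.node [])).dim + 1
      fun p => match p with
        | [] => .var []
        | [j] => if j ≤ k then .var [j] else .var [j + m - 1]
        | i :: q =>
          if i < k then .var (i :: q)
          else if i = k then
            ((discSub (unbiasedType T n) (unbiasedCoh T n)) (0 :: q)).sub (wedgeShift k)
          else .var ((i + m - 1) :: q)
  | k :: P, S, T => fun p => match p with
      | [] => .var []
      | [j] => .var [j]
      | i :: q =>
        if i = k then
          ((suspSub (kappa P (S.children.getD k (.node [])) (T.children.headD (.node []))))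
            (0 :: q)).sub (compSub k)
        else .var (i :: q)

/-- The inserted substitution `σ ≪ P , τ ≫ : S ≪ P , T ≫ → Γ`. -/
def insSub : List ℕ → Tree → Tree → Sub → Sub → Sub
  | [], _, _, σ, _ => σ
  | [k], _, T, σ, τ =>
      let m := T.children.length
      fun p => match p with
        | [] => σ []
        | [j] => if j < k then σ [j] else if j ≤ k + m then τ [j - k] else σ [j - m + 1]
        | i :: q =>
          if i < k then σ (i :: q)
          else if i < k + m then τ ((i - k) :: q)
          else σ ((i - m + 1) :: q)
  | k :: P, S, T, σ, τ => fun p => match p with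
      | [] => σ []
      | [j] => if j = k then τ [0] else if j = k + 1 then τ [1] else σ [j]
      | i :: q =>
        if i = k then
          insSub P (S.children.getD k (.node [])) (T.children.headD (.node []))
            (fun r => σ (k :: r)) (fun r => τ (0 :: r)) q
        else σ (i :: q)

/-! ### Syntactic equality (α-equality; substitutions are compared on all
valid variable paths of the relevant tree) -/

mutual
inductive TmEqv : Tm → Tm → Prop
  | var (p : Path) : TmEqv (.var p) (.var p)
  | coh (T : Tree) (A B : Ty) (σ τ : Sub) : TyEqv A B →
      (∀ p, IsPath T p → TmEqv (σ p) (τ p)) → TmEqv (.coh T A σ) (.coh T B τ)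
inductive TyEqv : Ty → Ty → Prop
  | star : TyEqv .star .star
  | arr {s s' t t' : Tm} {A A' : Ty} : TmEqv s s' → TyEqv A A' → TmEqv t t' →
      TyEqv (.arr s A t) (.arr s' A' t')
end

/-- Syntactic equality of substitutions out of (the context of) a tree. -/
def SubEqv (dom : Tree) (σ τ : Sub) : Prop := ∀ p, IsPath dom p → TmEqv (σ p) (τ p)

/-- Syntactic equality of substitutions on all locally maximal variables
(`σ ≡ᵐᵃˣ τ`). -/
def MaxEqv (dom : Tree) (σ τ : Sub) : Prop := ∀ p, IsMaxPath dom p → TmEqv (σ p) (τ p)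

/-! ### Insertion points and redexes -/

/-- An insertion point `(S, P, T)`. -/
def InsPoint (S : Tree) (P : List ℕ) (T : Tree) : Prop :=
  IsBranch S P ∧ bh P ≤ T.th

/-- An insertion redex `(S, P, T, Γ, σ, τ)` (the codomain context is implicit in
the raw substitutions): `⌊P⌋[σ] ≡ 𝒞_T^{lh(P)}[τ]`. -/
def InsRedex (S : Tree) (P : List ℕ) (T : Tree) (σ τ : Sub) : Prop :=
  InsPoint S P T ∧ TmEqv (σ (branchVar P S)) ((unbiasedCoh T (lh P S)).sub τ)

/-! ### Identities, rewrite rules, reduction -/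

/-- Identity terms: terms of the form `𝟙[σ]`. -/
def isIdentity (t : Tm) : Prop :=
  ∃ n σ, t = .coh (discTree n) (unbiasedType (discTree n) (n + 1)) σ

/-- The three generating rewrite rules of Catt_sua: disc removal,
endo-coherence removal, and insertion. -/
inductive SuaRule : Tm → Tm → Prop
  | disc (n : ℕ) (σ : Sub) :
      SuaRule (.coh (discTree n) (unbiasedType (discTree n) n) σ) (σ (discTree n).maxPath)
  | ecr (T : Tree) (s : Tm) (A : Ty) (σ : Sub) :
      ¬ isIdentity (.coh T (.arr s A s) σ) →
      SuaRule (.coh T (.arr s A s) σ) (idCoh (A.sub σ) (s.sub σ))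
  | ins (S T : Tree) (P : List ℕ) (A : Ty) (σ τ : Sub) :
      InsRedex S P T σ τ →
      (lh P S = T.dim ∨ T = discTree (lh P S - 1)) →
      ¬ isIdentity (.coh S A σ) →
      SuaRule (.coh S A σ)
        (.coh (insTree P S T) (A.sub (kappa P S T)) (insSub P S T σ τ))

mutual
/-- One-step reduction, flagged by whether the derivation uses the cell rule. -/
inductive Red : Bool → Tm → Tm → Prop
  | rule {s t : Tm} : SuaRule s t → Red false s t
  | cell {b : Bool} {A B : Ty} (T : Tree) (σ : Sub) : RedTy b A B →
      Red true (.coh T A σ) (.coh T B σ)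
  | arg {b : Bool} (T : Tree) (A : Ty) (σ τ : Sub) (p : Path) : IsPath T p →
      Red b (σ p) (τ p) → (∀ q, IsPath T q → q ≠ p → TmEqv (σ q) (τ q)) →
      Red b (.coh T A σ) (.coh T A τ)
inductive RedTy : Bool → Ty → Ty → Prop
  | src {b : Bool} {s s' t : Tm} {A : Ty} : Red b s s' → RedTy b (.arr s A t) (.arr s' A t)
  | base {b : Bool} {s t : Tm} {A A' : Ty} : RedTy b A A' → RedTy b (.arr s A t) (.arr s A' t)
  | tgt {b : Bool} {s t t' : Tm} {A : Ty} : Red b t t' → RedTy b (.arr s A t) (.arr s A t')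
end

/-- One-step reduction of terms. -/
def Red1 (s t : Tm) : Prop := ∃ b, Red b s t

/-- Multi-step reduction of terms. -/
def RedStar : Tm → Tm → Prop := Relation.ReflTransGen Red1

/-- Multi-step reduction of types. -/
def RedTyStar : Ty → Ty → Prop := Relation.ReflTransGen (fun A B => ∃ b, RedTy b A B)

/-- One-step reduction of substitutions out of a tree, flagged. -/
def RedSubF (b : Bool) (dom : Tree) (σ τ : Sub) : Prop :=
  ∃ p, IsPath dom p ∧ Red b (σ p) (τ p) ∧ ∀ q, IsPath dom q → q ≠ p → TmEqv (σ q) (τ q)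

/-! ### Free variables and support -/

mutual
inductive FvTm : Tm → Path → Prop
  | var (p : Path) : FvTm (.var p) p
  | coh {T : Tree} {A : Ty} {σ : Sub} {p q : Path} : IsPath T p → FvTm (σ p) q →
      FvTm (.coh T A σ) q
inductive FvTy : Ty → Path → Prop
  | src {s t : Tm} {A : Ty} {q : Path} : FvTm s q → FvTy (.arr s A t) q
  | base {s t : Tm} {A : Ty} {q : Path} : FvTy A q → FvTy (.arr s A t) q
  | tgt {s t : Tm} {A : Ty} {q : Path} : FvTm t q → FvTy (.arr s A t) q
end

/-- Downward closure of a set of variables in a context. -/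
inductive Closure (Γ : Ctx) (P : Path → Prop) : Path → Prop
  | base {p : Path} : P p → Closure Γ P p
  | step {p q : Path} {A : Ty} : Closure Γ P p → (p, A) ∈ Γ → FvTy A q → Closure Γ P q

/-- Support of a term. -/
def Tm.supp (Γ : Ctx) (t : Tm) : Set Path := {q | Closure Γ (FvTm t) q}

/-- Support of a substitution out of a tree. -/
def subSupp (Γ : Ctx) (dom : Tree) (σ : Sub) : Set Path :=
  {q | Closure Γ (fun r => ∃ p, IsPath dom p ∧ FvTm (σ p) r) q}

/-! ### Typing and definitional equality, parameterized by a rule set -/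

mutual
inductive CtxTy (R : Ctx → Tm → Tm → Prop) : Ctx → Prop
  | nil : CtxTy R []
  | cons {Γ : Ctx} {p : Path} {A : Ty} : CtxTy R Γ → TyTy R Γ A →
      CtxTy R ((p, A) :: Γ)
inductive TyTy (R : Ctx → Tm → Tm → Prop) : Ctx → Ty → Prop
  | star {Γ : Ctx} : TyTy R Γ .star
  | arr {Γ : Ctx} {s t : Tm} {A : Ty} : TyTy R Γ A → TmTy R Γ s A → TmTy R Γ t A →
      TyTy R Γ (.arr s A t)
inductive TmTy (R : Ctx → Tm → Tm → Prop) : Ctx → Tm → Ty → Prop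
  | var {Γ : Ctx} {p : Path} {A : Ty} : CtxTy R Γ → (p, A) ∈ Γ → TmTy R Γ (.var p) A
  | coh {Γ : Ctx} (S : Tree) (s t : Tm) (A : Ty) (σ : Sub) :
      TyTy R (treeCtx S) (.arr s A t) →
      (∀ p B, (p, B) ∈ treeCtx S → TmTy R Γ (σ p) (B.sub σ)) →
      Tm.supp (treeCtx S) s =
        subSupp (treeCtx S) (Tree.bdry (S.dim - 1) S) (incl false (S.dim - 1) S) →
      Tm.supp (treeCtx S) t =
        subSupp (treeCtx S) (Tree.bdry (S.dim - 1) S) (incl true (S.dim - 1) S) →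
      TmTy R Γ (.coh S (.arr s A t) σ) ((Ty.arr s A t).sub σ)
  | cohFull {Γ : Ctx} (S : Tree) (s t : Tm) (A : Ty) (σ : Sub) :
      TyTy R (treeCtx S) (.arr s A t) →
      (∀ p B, (p, B) ∈ treeCtx S → TmTy R Γ (σ p) (B.sub σ)) →
      Tm.supp (treeCtx S) s = {q | IsPath S q} →
      Tm.supp (treeCtx S) t = {q | IsPath S q} →
      TmTy R Γ (.coh S (.arr s A t) σ) ((Ty.arr s A t).sub σ)
  | conv {Γ : Ctx} {u : Tm} {A B : Ty} : TmTy R Γ u A → TyEq R Γ A B → TmTy R Γ u B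
inductive TmEq (R : Ctx → Tm → Tm → Prop) : Ctx → Tm → Tm → Prop
  | var {Γ : Ctx} (p : Path) : TmEq R Γ (.var p) (.var p)
  | symm {Γ : Ctx} {s t : Tm} : TmEq R Γ s t → TmEq R Γ t s
  | trans {Γ : Ctx} {s t u : Tm} : TmEq R Γ s t → TmEq R Γ t u → TmEq R Γ s u
  | coh {Γ : Ctx} (S : Tree) (A B : Ty) (σ τ : Sub) : TyEq R (treeCtx S) A B →
      (∀ p C, (p, C) ∈ treeCtx S → TmEq R Γ (σ p) (τ p)) →
      TmEq R Γ (.coh S A σ) (.coh S B τ)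
  | rule {Γ : Ctx} {s t : Tm} (A : Ty) : R Γ s t → TmTy R Γ s A → TmEq R Γ s t
inductive TyEq (R : Ctx → Tm → Tm → Prop) : Ctx → Ty → Ty → Prop
  | star {Γ : Ctx} : TyEq R Γ .star .star
  | arr {Γ : Ctx} {s s' t t' : Tm} {A A' : Ty} : TmEq R Γ s s' → TyEq R Γ A A' →
      TmEq R Γ t t' → TyEq R Γ (.arr s A t) (.arr s' A' t')
end

/-- Well-typedness of a substitution: `Γ ⊢ σ : Δ`. -/
def SubTyped (R : Ctx → Tm → Tm → Prop) (Γ : Ctx) (σ : Sub) (Δ : Ctx) : Prop :=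
  ∀ p A, (p, A) ∈ Δ → TmTy R Γ (σ p) (A.sub σ)

/-- Definitional equality of substitutions with domain `Δ`: `Γ ⊢ σ = τ`. -/
def SubDefEq (R : Ctx → Tm → Tm → Prop) (Γ Δ : Ctx) (σ τ : Sub) : Prop :=
  ∀ p A, (p, A) ∈ Δ → TmEq R Γ (σ p) (τ p)

/-- Definitional equality of substitutions out of a tree on all locally maximal
variables (`σ =ᵐᵃˣ τ`). -/
def MaxDefEq (R : Ctx → Tm → Tm → Prop) (Γ : Ctx) (dom : Tree) (σ τ : Sub) : Prop :=
  ∀ p, IsMaxPath dom p → TmEq R Γ (σ p) (τ p)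

/-! ### Conditions on rule sets -/

/-- The lifting condition. -/
def LiftCond (R : Ctx → Tm → Tm → Prop) : Prop :=
  ∀ Γ s t q A, R Γ s t → (∃ B, TmTy R ((q, A) :: Γ) s B) → TmEq R ((q, A) :: Γ) s t

/-- The substitution condition. -/
def SubCond (R : Ctx → Tm → Tm → Prop) : Prop :=
  ∀ Γ s t Δ (σ : Sub), R Γ s t → (∀ p A, (p, A) ∈ Γ → TmTy R Δ (σ p) (A.sub σ)) →
    (∃ C, TmTy R Δ (s.sub σ) C) → TmEq R Δ (s.sub σ) (t.sub σ)

/-- The suspension condition. -/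
def SuspCond (R : Ctx → Tm → Tm → Prop) : Prop :=
  ∀ Γ s t, R Γ s t → (∃ A, TmTy R (ctxSusp Γ) s.susp A) →
    TmEq R (ctxSusp Γ) s.susp t.susp

/-- A rule set is tame if it satisfies the lifting, substitution and suspension
conditions. -/
def Tame (R : Ctx → Tm → Tm → Prop) : Prop := LiftCond R ∧ SubCond R ∧ SuspCond R

/-- The rule set generating Catt_sua. -/
def suaR : Ctx → Tm → Tm → Prop := fun _ s t => SuaRule s t

/-- The `n`-bounded restriction of the sua rule set, generating `n`-bounded
definitional equality `=ₙ`. -/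
def suaBnd (n : ℕ) : Ctx → Tm → Tm → Prop := fun Γ s t => suaR Γ s t ∧ s.dim < n

/-! ### Syntactic complexity -/

open Classical in
/-- Syntactic complexity of a term: an ordinal below `ω ^ ω`. -/
noncomputable def Tm.sc : Tm → Ordinal :=
  Tm.rec (motive_1 := fun _ => Ordinal) (motive_2 := fun _ => Ordinal)
    0 (fun _ _ _ _ _ _ => 0)
    (fun _ => 0)
    (fun T A σ _ ih =>
      (if isIdentity (.coh T A σ) then Ordinal.omega0 ^ (A.dim : Ordinal)
       else Ordinal.omega0 ^ (A.dim : Ordinal) ♯ Ordinal.omega0 ^ (A.dim : Ordinal)) ♯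
        ((treePaths T).map ih).foldr (· ♯ ·) 0)

/-- Syntactic complexity of a substitution out of a tree. -/
noncomputable def scSub (dom : Tree) (σ : Sub) : Ordinal :=
  ((treePaths dom).map (fun p => (σ p).sc)).foldr (· ♯ ·) 0

/-!
Induction along the branch `P`. The boundary `∂ₙ` acts on the children of a tree by `∂ₙ₋₁`,
so it commutes with the list surgery defining `S≪P,T≫` as soon as `bh(P) ≤ n`. The inclusions
`δ` are renamings of variables, and so is `κ` away from the branch; along the branch `κ` is the
suspension of the `κ` one level down, and `δ` commutes with suspension. At the bottom, the
branch ends in a disc `Dᵈ` with `lh(P) = d + 1`, and `κ` sends its maximal variable to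
`𝒞_T^{d+1}` and its boundary variables to the sources and targets of `𝒰_T^{d+1}`. If `d < n`,
the maximal variable survives in `∂ₙ S` and `δₙ` is the identity on `T`, as `dim T ≤ n`. If
`n ≤ d`, only the `n`-dimensional boundary variable of `Dᵈ` survives; `κ` sends it to the
`n`-dimensional source or target of `𝒰_T^{d+1}`, which is `𝒞` of `∂ₙ T` pushed along
`δₙᵉ(T)`: since `th(T) < n`, `∂ₙ T` is not a disc, so this is the coherence that `κ` of the
boundaries produces.
-/

section TakeAppendDrop

variable {α : Type*} (ts mid : List α) {k : ℕ} (d : α)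

theorem getD_take_append_drop_of_lt (hk : k ≤ ts.length) {i : ℕ} (hi : i < k) :
    (ts.take k ++ mid ++ ts.drop (k + 1)).getD i d = ts.getD i d := by
  simp [List.getElem?_append_left, Nat.lt_of_lt_of_le hi hk, hi]

theorem getD_take_append_drop_add (hk : k ≤ ts.length) {j : ℕ} (hj : j < mid.length) :
    (ts.take k ++ mid ++ ts.drop (k + 1)).getD (k + j) d = mid.getD j d := by
  have : (ts.take k).length = k := by simp [hk]
  simp [List.getElem?_append_left, List.getElem?_append_right, this, hj]

theorem getD_take_append_drop_of_gt (hk : k ≤ ts.length) {i : ℕ} (hi : k < i) :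
    (ts.take k ++ mid ++ ts.drop (k + 1)).getD (i + mid.length - 1) d = ts.getD i d := by
  have : (ts.take k ++ mid).length = k + mid.length := by simp [hk]
  rw [List.append_assoc]
  simp only [List.getD_eq_getElem?_getD]
  rw [← List.append_assoc, List.getElem?_append_right (by omega), this, List.getElem?_drop]
  congr 3
  omega

end TakeAppendDrop


namespace Tree

@[simp] theorem children_node (ts : List Tree) : (node ts).children = ts := rfl

theorem dim_node_cons (t : Tree) (ts : List Tree) :
    (node (t :: ts)).dim = max (t.dim + 1) (node ts).dim := by
  simp [dim]

theorem dim_lt_of_mem {ts : List Tree} {t : Tree} (h : t ∈ ts) : t.dim < (node ts).dim := by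
  induction ts with
  | nil => simp at h
  | cons a ts ih =>
    rw [dim_node_cons]
    rcases List.mem_cons.mp h with rfl | h
    · omega
    · have := ih h; omega

theorem dim_getD_lt {ts : List Tree} {k : ℕ} (hk : k < ts.length) :
    (ts.getD k (node [])).dim < (node ts).dim := by
  rw [List.getD_eq_getElem _ _ hk]
  exact dim_lt_of_mem (List.getElem_mem hk)

@[simp] theorem bdry_zero (T : Tree) : T.bdry 0 = node [] := by
  simp [bdry]

@[simp] theorem bdry_succ_node (n : ℕ) (ts : List Tree) :
    (node ts).bdry (n + 1) = node (ts.map (bdry n)) := by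
  induction ts with
  | nil => simp [bdry]
  | cons t ts ih => simp [bdry, ih, children]

@[simp] theorem bdry_leaf (n : ℕ) : (node []).bdry n = node [] := by
  cases n <;> simp

theorem children_bdry_getD (n : ℕ) (S : Tree) (i : ℕ) :
    (S.bdry (n + 1)).children.getD i (node []) = (S.children.getD i (node [])).bdry n := by
  obtain ⟨ts⟩ := S
  simpa [children] using List.getD_map (l := ts) (n := i) (d := node []) (bdry n)

theorem bdry_of_dim_le : ∀ (n : ℕ) (T : Tree), T.dim ≤ n → T.bdry n = T
  | 0, node ts, h => by
    cases ts with
    | nil => simp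
    | cons t ts => rw [dim_node_cons] at h; omega
  | n + 1, node ts, h => by
    rw [bdry_succ_node, List.map_congr_left (l := ts) (g := id), List.map_id]
    exact fun t ht => bdry_of_dim_le n t (by have := dim_lt_of_mem ht; omega)

theorem th_bdry_le : ∀ (n : ℕ) (T : Tree), (T.bdry n).th ≤ T.th
  | 0, _ => by simp [th]
  | _ + 1, node [] => by simp
  | n + 1, node [t] => by simpa [th] using th_bdry_le n t
  | _ + 1, node (_ :: _ :: _) => by simp [th]

end Tree

@[simp] theorem th_discTree : ∀ d, (discTree d).th = d
  | 0 => rfl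
  | d + 1 => by simp [discTree, Tree.th, th_discTree d]

@[simp] theorem dim_discTree : ∀ d, (discTree d).dim = d
  | 0 => by simp [discTree, Tree.dim]
  | d + 1 => by simp [discTree, Tree.dim, dim_discTree d]

theorem bdry_discTree : ∀ n d, (discTree d).bdry n = discTree (min n d)
  | 0, _ => by simp [discTree]
  | _ + 1, 0 => by simp [discTree]
  | n + 1, d + 1 => by simp [discTree, bdry_discTree n d, Nat.succ_min_succ]

theorem Tree.eq_discTree_of_linear : ∀ T : Tree, T.linear → T = discTree T.dim
  | node [], _ => by simp [dim, discTree]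
  | node [t], h => by
    have ht : t.linear := by simpa [linear, th, dim] using h
    simpa [dim, discTree] using eq_discTree_of_linear t ht
  | node (a :: b :: ts), h => by
    have := dim_lt_of_mem (ts := a :: b :: ts) (List.mem_cons_self ..)
    simp [linear, th] at h
    omega

theorem maxPath_discTree : ∀ d, (discTree d).maxPath = List.replicate d 0 ++ [0]
  | 0 => rfl
  | d + 1 => by simp [discTree, Tree.maxPath, maxPath_discTree d, List.replicate_succ]

theorem isMaxPath_discTree : ∀ {d : ℕ} {q : Path}, IsMaxPath (discTree d) q →
    q = List.replicate d 0 ++ [0]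
  | 0, _, .here => rfl
  | 0, _, .there _ _ _ hk _ => by simp at hk
  | d + 1, _, .there _ k _ hk hq => by
    obtain rfl : k = 0 := by simpa using hk
    simp [isMaxPath_discTree hq, List.replicate_succ]

theorem IsPath.ne_nil {T : Tree} {p : Path} (h : IsPath T p) : p ≠ [] := by
  cases h <;> simp

theorem IsMaxPath.ne_nil {T : Tree} {p : Path} (h : IsMaxPath T p) : p ≠ [] := by
  cases h <;> simp

theorem IsMaxPath.isPath {T : Tree} {p : Path} (h : IsMaxPath T p) : IsPath T p := by
  induction h with
  | here => exact .point [] 0 le_rfl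
  | there ts k p hk _ ih => exact .deeper ts k p hk ih

theorem IsPath.of_bdry : ∀ {n : ℕ} {T : Tree} {p : Path}, IsPath (T.bdry n) p → IsPath T p
  | 0, .node ts, _, h => by
    rw [Tree.bdry_zero] at h
    cases h with
    | point _ j hj => exact .point ts j (by simp at hj; omega)
    | deeper _ _ _ hk _ => simp at hk
  | n + 1, .node ts, _, h => by
    rw [Tree.bdry_succ_node] at h
    cases h with
    | point _ j hj => exact .point ts j (by simpa using hj)
    | deeper _ k p hk hp =>
      rw [List.length_map] at hk
      have := Tree.children_bdry_getD n (.node ts) k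
      simp only [Tree.bdry_succ_node, Tree.children] at this
      exact .deeper ts k p hk (IsPath.of_bdry (n := n) (this ▸ hp))

theorem Tree.children_bdry_headD (n : ℕ) (T : Tree) :
    (T.bdry (n + 1)).children.headD (node []) = (T.children.headD (node [])).bdry n := by
  obtain ⟨_ | ⟨t, ts⟩⟩ := T <;> simp [children]

theorem Tree.exists_eq_node_singleton {T : Tree} (h : 0 < T.th) : ∃ t, T = node [t] := by
  match T with
  | node [t] => exact ⟨t, rfl⟩
  | node [] | node (_ :: _ :: _) => simp [th] at h

theorem insTree_bdry : ∀ (P : List ℕ) (n : ℕ) (S T : Tree), bh P ≤ n →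
    insTree P (S.bdry n) (T.bdry n) = (insTree P S T).bdry n
  | [], _, _, _, _ => rfl
  | [_], 0, _, _, _ => by simp [insTree, Tree.children]
  | [k], n + 1, .node ss, .node ts, _ => by
    simp [insTree, Tree.children, List.map_take, List.map_drop]
  | k :: b :: P, n, S, T, h => by
    obtain ⟨m, rfl⟩ : ∃ m, n = m + 1 := ⟨n - 1, by simp [bh] at h; omega⟩
    obtain ⟨ss⟩ := S
    have ih := insTree_bdry (b :: P) m (ss.getD k (.node [])) (T.children.headD (.node []))
      (by simp [bh] at h ⊢; omega)
    have hk := Tree.children_bdry_getD m (.node ss) k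
    simp only [Tree.children_node, Tree.bdry_succ_node] at hk
    simp only [insTree, Tree.bdry_succ_node, Tree.children_node, hk, Tree.children_bdry_headD, ih,
      List.map_append, List.map_take, List.map_drop, List.map_cons, List.map_nil]

theorem lh_singleton (k : ℕ) (S : Tree) :
    lh [k] S = (S.children.getD k (.node [])).maxPath.length := by
  simp [lh, branchVar]

theorem Tree.maxPath_ne_nil (T : Tree) : T.maxPath ≠ [] := by
  obtain ⟨_ | _⟩ := T <;> simp [maxPath]

theorem branchVar_ne_nil : ∀ (P : List ℕ) (S : Tree), branchVar P S ≠ []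
  | [], S => S.maxPath_ne_nil
  | [_], _ => by simp [branchVar]
  | _ :: _ :: _, _ => by simp [branchVar]

theorem lh_cons (k : ℕ) {P : List ℕ} (hP : P ≠ []) (S : Tree) :
    lh (k :: P) S = lh P (S.children.getD k (.node [])) + 1 := by
  obtain ⟨b, P, rfl⟩ := List.exists_cons_of_ne_nil hP
  have := List.length_pos_of_ne_nil (branchVar_ne_nil (b :: P) (S.children.getD k (.node [])))
  simp only [lh, branchVar, List.length_cons]
  omega

theorem bh_cons (k : ℕ) {P : List ℕ} (hP : P ≠ []) : bh (k :: P) = bh P + 1 := by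
  have := List.length_pos_of_ne_nil hP
  simp only [bh, List.length_cons]
  omega

theorem IsBranch.bh_lt_lh {S : Tree} {P : List ℕ} (h : IsBranch S P) : bh P < lh P S := by
  induction h with
  | here ts k _ _ =>
    have := List.length_pos_of_ne_nil (Tree.maxPath_ne_nil (ts.getD k (.node [])))
    simp only [bh, lh_singleton, Tree.children_node, List.length_singleton]
    omega
  | there ts k P _ hP _ ih =>
    obtain ⟨b, P, rfl⟩ := List.exists_cons_of_ne_nil hP
    rw [lh_cons k hP]
    simp only [bh, List.length_cons, Tree.children_node] at ih ⊢
    omega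

def inclPath (ε : Bool) : ℕ → Tree → Path → Path
  | 0, T, _ => [if ε then T.children.length else 0]
  | _ + 1, _, [] => []
  | _ + 1, _, [j] => [j]
  | n + 1, T, i :: q => i :: inclPath ε n (T.children.getD i (.node [])) q

theorem inclPath_ne_nil (ε : Bool) : ∀ (n : ℕ) (T : Tree) {p : Path}, p ≠ [] →
    inclPath ε n T p ≠ []
  | 0, _, _, _ => by simp [inclPath]
  | _ + 1, _, [_], _ => by simp [inclPath]
  | _ + 1, _, _ :: _ :: _, _ => by simp [inclPath]

theorem incl_eq_var (ε : Bool) : ∀ (n : ℕ) (T : Tree) {p : Path}, p ≠ [] →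
    incl ε n T p = .var (inclPath ε n T p)
  | 0, _, _, _ => by cases ε <;> simp [incl, inclPath]
  | _ + 1, _, [_], _ => by simp [incl, inclPath]
  | n + 1, T, i :: j :: q, _ => by
    have hne := inclPath_ne_nil ε n (T.children.getD i (.node [])) (p := j :: q) (by simp)
    obtain ⟨a, r, hr⟩ := List.exists_cons_of_ne_nil hne
    simp only [incl, inclPath, incl_eq_var ε n _ (List.cons_ne_nil j q), hr]
    rfl

theorem incl_succ_singleton (ε : Bool) (n : ℕ) (T : Tree) (j : ℕ) :
    incl ε (n + 1) T [j] = .var [j] := by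
  simp [incl]

theorem incl_succ_cons (ε : Bool) (n : ℕ) (T : Tree) (i : ℕ) {q : Path} (hq : q ≠ []) :
    incl ε (n + 1) T (i :: q) = .var (i :: inclPath ε n (T.children.getD i (.node [])) q) := by
  obtain ⟨a, q, rfl⟩ := List.exists_cons_of_ne_nil hq
  exact incl_eq_var ε (n + 1) T (List.cons_ne_nil _ _)

theorem inclPath_of_dim_le (ε : Bool) : ∀ (n : ℕ) {T : Tree} {p : Path}, IsPath T p →
    T.dim ≤ n → inclPath ε n T p = p
  | 0, _, _, .point ts j hj, hd => by
    obtain rfl : ts = [] := by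
      cases ts with
      | nil => rfl
      | cons t ts => rw [Tree.dim_node_cons] at hd; omega
    obtain rfl : j = 0 := by simpa using hj
    cases ε <;> simp [inclPath]
  | 0, _, _, .deeper ts k _ hk _, hd => by have := Tree.dim_getD_lt hk; omega
  | _ + 1, _, _, .point _ _ _, _ => by simp [inclPath]
  | n + 1, _, _, .deeper ts k p hk hp, hd => by
    obtain ⟨a, q, rfl⟩ := List.exists_cons_of_ne_nil hp.ne_nil
    have := Tree.dim_getD_lt hk
    simp only [inclPath, Tree.children_node, inclPath_of_dim_le ε n hp (by omega)]

theorem inclPath_discTree_of_lt (ε : Bool) : ∀ {m d : ℕ}, m < d →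
    inclPath ε m (discTree d) (List.replicate m 0 ++ [0]) = List.replicate m 0 ++ [ε.toNat]
  | 0, d + 1, _ => by cases ε <;> simp [inclPath, discTree]
  | m + 1, d + 1, h => by
    obtain ⟨a, r, hr⟩ := List.exists_cons_of_ne_nil
      (show List.replicate m 0 ++ [0] ≠ [] by simp)
    have ih := inclPath_discTree_of_lt ε (m := m) (d := d) (by omega)
    rw [hr] at ih
    simp only [List.replicate_succ, List.cons_append, hr, inclPath, discTree]
    exact congrArg _ ih

theorem Tm.sub_sub : ∀ (t : Tm) (σ τ : Sub), (t.sub σ).sub τ = t.sub (Sub.comp σ τ)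
  | .var _, _, _ => rfl
  | .coh T A ρ, σ, τ => by
    simp only [Tm.sub]
    exact congrArg _ (funext fun p => Tm.sub_sub (ρ p) σ τ)

theorem Tm.susp_sub : ∀ (t : Tm) {σ : Sub}, σ [] = .var [] →
    (t.sub σ).susp = t.susp.sub (suspSub σ)
  | .var [], _, h => by simp [Tm.sub, h, Tm.susp, suspSub]
  | .var (_ :: _), _, _ => rfl
  | .coh T A ρ, σ, h => by
    simp only [Tm.susp, Tm.sub]
    congr 1
    funext p
    match p with
    | [] | [_] | (_ + 1) :: _ :: _ => rfl
    | 0 :: a :: q => exact Tm.susp_sub (ρ (a :: q)) h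

mutual

theorem TmEqv.refl : ∀ t : Tm, TmEqv t t
  | .var p => .var p
  | .coh T A σ => .coh T A A σ σ (TyEqv.refl A) fun p _ => TmEqv.refl (σ p)

theorem TyEqv.refl : ∀ A : Ty, TyEqv A A
  | .star => .star
  | .arr s A t => .arr (TmEqv.refl s) (TyEqv.refl A) (TmEqv.refl t)

end

mutual

theorem TmEqv.trans : ∀ {a b c : Tm}, TmEqv a b → TmEqv b c → TmEqv a c
  | _, _, _, .var _, h => h
  | _, _, _, .coh T _ _ _ _ hA hσ, .coh _ _ _ _ _ hB hτ =>
    .coh T _ _ _ _ (TyEqv.trans hA hB) fun p hp => TmEqv.trans (hσ p hp) (hτ p hp)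

theorem TyEqv.trans : ∀ {A B C : Ty}, TyEqv A B → TyEqv B C → TyEqv A C
  | _, _, _, .star, h => h
  | _, _, _, .arr hs hA ht, .arr hs' hA' ht' =>
    .arr (TmEqv.trans hs hs') (TyEqv.trans hA hA') (TmEqv.trans ht ht')

end

theorem TmEqv.sub : ∀ {a b : Tm} {σ τ : Sub}, TmEqv a b →
    (∀ p, FvTm b p → TmEqv (σ p) (τ p)) → TmEqv (a.sub σ) (b.sub τ)
  | _, _, _, _, .var p, h => h p (.var p)
  | _, _, _, _, .coh T _ _ _ _ hA hσ, h =>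
    .coh T _ _ _ _ hA fun p hp => TmEqv.sub (hσ p hp) fun q hq => h q (.coh hp hq)

mutual

theorem TmEqv.susp : ∀ {a b : Tm}, TmEqv a b → TmEqv a.susp b.susp
  | _, _, .var _ => .var _
  | _, _, .coh T _ _ σ τ hA hσ => by
    simp only [Tm.susp]
    refine .coh _ _ _ _ _ (TyEqv.susp hA) fun p hp => ?_
    match p, hp with
    | [_], _ => exact .var _
    | 0 :: _ :: _, .deeper _ _ _ _ hq => exact TmEqv.susp (hσ _ hq)
    | (_ + 1) :: _, .deeper _ _ _ hk _ => simp at hk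

theorem TyEqv.susp : ∀ {A B : Ty}, TyEqv A B → TyEqv A.susp B.susp
  | _, _, .star => TyEqv.refl _
  | _, _, .arr hs hA ht => .arr (TmEqv.susp hs) (TyEqv.susp hA) (TmEqv.susp ht)

end

theorem FvTm.of_susp : ∀ {t : Tm} {p : Path}, FvTm t.susp p →
    (∃ j, p = [j]) ∨ ∃ q ≠ [], p = 0 :: q
  | .var [], _, h => by cases h; exact .inl ⟨0, rfl⟩
  | .var (a :: q), _, h => by cases h; exact .inr ⟨a :: q, List.cons_ne_nil _ _, rfl⟩
  | .coh T A σ, _, h => by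
    simp only [Tm.susp] at h
    cases h with | coh hp hf => ?_
    rename_i p
    change IsPath (.node [T]) p at hp
    match p, hp, hf with
    | [0], _, hf | [_ + 1], _, hf => cases hf; exact .inl ⟨_, rfl⟩
    | 0 :: _ :: _, .deeper _ _ _ _ _, hf => exact FvTm.of_susp hf
    | (_ + 1) :: _, .deeper _ _ _ hk _, _ => simp at hk

theorem length_srcs_unbiasedType (T : Tree) : ∀ n, (unbiasedType T n).srcs.length = n
  | 0 => by simp [unbiasedType, Ty.srcs]
  | n + 1 => by simp [unbiasedType, Ty.srcs, length_srcs_unbiasedType T n]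

theorem getD_srcs_unbiasedType (T : Tree) (x : Tm × Tm) : ∀ {n j : ℕ}, j < n →
    (unbiasedType T n).srcs.getD j x =
      ((unbiasedTm (T.bdry j) j).sub (incl false j T),
        (unbiasedTm (T.bdry j) j).sub (incl true j T))
  | n + 1, j, h => by
    have hsrcs : (unbiasedType T (n + 1)).srcs = (unbiasedType T n).srcs ++
        [((unbiasedTm (T.bdry n) n).sub (incl false n T),
          (unbiasedTm (T.bdry n) n).sub (incl true n T))] := by
      simp [unbiasedType, Ty.srcs]
    rcases Nat.lt_or_ge j n with hj | hj
    · rw [hsrcs, List.getD_append _ _ _ _ (by rwa [length_srcs_unbiasedType]),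
        getD_srcs_unbiasedType T x hj]
    · obtain rfl : j = n := by omega
      rw [hsrcs, List.getD_append_right _ _ _ _ (by rw [length_srcs_unbiasedType])]
      simp [length_srcs_unbiasedType]

theorem discSub_unbiasedType_of_le (T : Tree) (u : Tm) {n : ℕ} {p : Path}
    (hp : n ≤ p.length - 1) : discSub (unbiasedType T n) u p = u := by
  simp [discSub, length_srcs_unbiasedType, Nat.not_lt.mpr hp]

theorem discSub_unbiasedType_of_lt (T : Tree) (u : Tm) {n : ℕ} {p : Path}
    (hp : p.length - 1 < n) : discSub (unbiasedType T n) u p =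
      (unbiasedTm (T.bdry (p.length - 1)) (p.length - 1)).sub
        (incl (p.getLastD 0 != 0) (p.length - 1) T) := by
  simp only [discSub, length_srcs_unbiasedType, hp, getD_srcs_unbiasedType T _ hp]
  cases p.getLastD 0 <;> simp

theorem unbiasedTm_of_ne {T : Tree} {n : ℕ} (h : T ≠ discTree n) :
    unbiasedTm T n = unbiasedCoh T n := by
  rw [unbiasedTm, if_neg h, unbiasedCoh]

theorem unbiasedCoh_sub_eqv (T : Tree) (n : ℕ) {σ τ : Sub}
    (h : ∀ p, IsPath T p → σ p = τ p) :
    TmEqv ((unbiasedCoh T n).sub σ) ((unbiasedCoh T n).sub τ) :=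
  .coh T _ _ _ _ (TyEqv.refl _) fun p hp => by
    simp only [Tm.sub, h p hp]
    exact TmEqv.refl _

section Kappa

variable (S T : Tree) {k i : ℕ} {q : Path}

theorem kappa_singleton_of_lt (hi : i < k) (hq : q ≠ []) :
    kappa [k] S T (i :: q) = .var (i :: q) := by
  obtain ⟨a, q, rfl⟩ := List.exists_cons_of_ne_nil hq
  simp [kappa, hi]

theorem kappa_singleton_self (hq : q ≠ []) :
    kappa [k] S T (k :: q) =
      (discSub (unbiasedType T ((S.children.getD k (.node [])).dim + 1))
        (unbiasedCoh T ((S.children.getD k (.node [])).dim + 1)) (0 :: q)).sub (wedgeShift k) := by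
  obtain ⟨a, q, rfl⟩ := List.exists_cons_of_ne_nil hq
  simp [kappa]

theorem kappa_singleton_of_gt (hi : k < i) (hq : q ≠ []) :
    kappa [k] S T (i :: q) = .var ((i + T.children.length - 1) :: q) := by
  obtain ⟨a, q, rfl⟩ := List.exists_cons_of_ne_nil hq
  simp [kappa, Nat.not_lt.mpr hi.le, hi.ne']

theorem kappa_cons_self {P : List ℕ} (hP : P ≠ []) (hq : q ≠ []) :
    kappa (k :: P) S T (k :: q) =
      ((kappa P (S.children.getD k (.node [])) (T.children.headD (.node [])) q).susp).sub
        (compSub k) := by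
  obtain ⟨b, P, rfl⟩ := List.exists_cons_of_ne_nil hP
  obtain ⟨a, q, rfl⟩ := List.exists_cons_of_ne_nil hq
  simp [kappa, suspSub]

theorem kappa_cons_of_ne {P : List ℕ} (hP : P ≠ []) (hq : q ≠ []) (hi : i ≠ k) :
    kappa (k :: P) S T (i :: q) = .var (i :: q) := by
  obtain ⟨b, P, rfl⟩ := List.exists_cons_of_ne_nil hP
  obtain ⟨a, q, rfl⟩ := List.exists_cons_of_ne_nil hq
  simp [kappa, hi]

theorem children_insTree_singleton :
    (insTree [k] S T).children = S.children.take k ++ T.children ++ S.children.drop (k + 1) :=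
  rfl

theorem children_insTree_cons {P : List ℕ} (hP : P ≠ []) :
    (insTree (k :: P) S T).children = S.children.take k ++
      [insTree P (S.children.getD k (.node [])) (T.children.headD (.node []))] ++
        S.children.drop (k + 1) := by
  obtain ⟨b, P, rfl⟩ := List.exists_cons_of_ne_nil hP
  rfl

end Kappa

@[simp] theorem Tm.var_sub (p : Path) (σ : Sub) : (Tm.var p).sub σ = σ p := rfl

theorem Tree.length_children_bdry (n : ℕ) (T : Tree) :
    (T.bdry (n + 1)).children.length = T.children.length := by
  obtain ⟨ts⟩ := T
  simp

theorem incl_of_dim_le (ε : Bool) {n : ℕ} {T : Tree} {p : Path} (hp : IsPath T p)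
    (hT : T.dim ≤ n) : incl ε n T p = .var p := by
  rw [incl_eq_var ε n T hp.ne_nil, inclPath_of_dim_le ε n hp hT]

theorem IsMaxPath.exists_of_bdry_succ {n : ℕ} {S : Tree} (hS : S.children ≠ []) {p : Path}
    (hp : IsMaxPath (S.bdry (n + 1)) p) : ∃ i q, p = i :: q ∧ i < S.children.length ∧
      IsMaxPath ((S.children.getD i (.node [])).bdry n) q := by
  obtain ⟨_ | ⟨t, ts⟩⟩ := S
  · simp at hS
  rw [Tree.bdry_succ_node, List.map_cons] at hp
  cases hp with
  | there _ i q hi hq =>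
    refine ⟨i, q, rfl, by simpa using hi, ?_⟩
    rwa [← Tree.children_bdry_getD, Tree.bdry_succ_node, Tree.children_node, List.map_cons]

section InsertionSingleton

variable (ε : Bool) (m : ℕ) {S : Tree} (T : Tree) {k : ℕ}

theorem wedgeShift_sub_incl_insTree (hk : k ≤ S.children.length) {p : Path} (hp : IsPath T p) :
    (wedgeShift k p).sub (incl ε (m + 1) (insTree [k] S T)) =
      (incl ε (m + 1) T p).sub (wedgeShift k) := by
  cases hp with
  | point _ j _ => simp [wedgeShift, incl_succ_singleton]
  | deeper ts j q hj hq =>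
    rw [wedgeShift, Tm.var_sub, incl_succ_cons _ _ _ _ hq.ne_nil,
      incl_succ_cons _ _ _ _ hq.ne_nil, children_insTree_singleton, Tree.children_node,
      add_comm j k, getD_take_append_drop_add _ _ _ hk hj]
    simp [wedgeShift, add_comm]

theorem incl_comp_kappa_singleton_of_lt (hk : k ≤ S.children.length) {i : ℕ} (hi : i < k)
    {q : Path} (hq : q ≠ []) :
    Sub.comp (incl ε (m + 1) S) (kappa [k] S T) (i :: q) =
      Sub.comp (kappa [k] (S.bdry (m + 1)) (T.bdry (m + 1)))
        (incl ε (m + 1) (insTree [k] S T)) (i :: q) := by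
  simp only [Sub.comp, incl_succ_cons _ _ _ _ hq, Tm.var_sub,
    kappa_singleton_of_lt _ _ hi (inclPath_ne_nil _ _ _ hq), kappa_singleton_of_lt _ _ hi hq,
    children_insTree_singleton, getD_take_append_drop_of_lt _ _ _ hk hi]

theorem incl_comp_kappa_singleton_of_gt (hk : k ≤ S.children.length) {i : ℕ} (hi : k < i)
    {q : Path} (hq : q ≠ []) :
    Sub.comp (incl ε (m + 1) S) (kappa [k] S T) (i :: q) =
      Sub.comp (kappa [k] (S.bdry (m + 1)) (T.bdry (m + 1)))
        (incl ε (m + 1) (insTree [k] S T)) (i :: q) := by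
  simp only [Sub.comp, incl_succ_cons _ _ _ _ hq, Tm.var_sub,
    kappa_singleton_of_gt _ _ hi (inclPath_ne_nil _ _ _ hq), kappa_singleton_of_gt _ _ hi hq,
    Tree.length_children_bdry, children_insTree_singleton,
    getD_take_append_drop_of_gt _ _ _ hk hi]

theorem incl_comp_kappa_singleton_self_of_le (hk : k ≤ S.children.length) {d : ℕ}
    (hS : S.children.getD k (.node []) = discTree d) (hdm : d ≤ m) (hT : T.dim ≤ d + 1)
    {q : Path} (hq : IsMaxPath (discTree d) q) :
    TmEqv (Sub.comp (incl ε (m + 1) S) (kappa [k] S T) (k :: q))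
      (Sub.comp (kappa [k] (S.bdry (m + 1)) (T.bdry (m + 1)))
        (incl ε (m + 1) (insTree [k] S T)) (k :: q)) := by
  have hlen : (0 :: q).length - 1 = d + 1 := by simp [isMaxPath_discTree hq]
  have hS' : (S.bdry (m + 1)).children.getD k (.node []) = discTree d := by
    rw [Tree.children_bdry_getD, hS, bdry_discTree, min_eq_right hdm]
  simp only [Sub.comp, incl_succ_cons _ _ _ _ hq.ne_nil, Tm.var_sub, hS,
    inclPath_of_dim_le ε m hq.isPath (by simpa using hdm), kappa_singleton_self _ _ hq.ne_nil, hS',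
    Tree.bdry_of_dim_le (m + 1) T (by omega), dim_discTree,
    discSub_unbiasedType_of_le T _ hlen.ge, Tm.sub_sub]
  refine unbiasedCoh_sub_eqv _ _ fun p hp => ?_
  rw [Sub.comp, wedgeShift_sub_incl_insTree ε m T hk hp, incl_of_dim_le ε hp (by omega),
    Tm.var_sub]

theorem incl_comp_kappa_singleton_self_of_lt (hk : k ≤ S.children.length) {d : ℕ}
    (hS : S.children.getD k (.node []) = discTree d) (hmd : m < d) (hT : T.th ≤ m) :
    TmEqv (Sub.comp (incl ε (m + 1) S) (kappa [k] S T) (k :: (List.replicate m 0 ++ [0])))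
      (Sub.comp (kappa [k] (S.bdry (m + 1)) (T.bdry (m + 1)))
        (incl ε (m + 1) (insTree [k] S T)) (k :: (List.replicate m 0 ++ [0]))) := by
  have hS' : (S.bdry (m + 1)).children.getD k (.node []) = discTree m := by
    rw [Tree.children_bdry_getD, hS, bdry_discTree, min_eq_left hmd.le]
  have hbdry : T.bdry (m + 1) ≠ discTree (m + 1) := fun h => by
    have := Tree.th_bdry_le (m + 1) T
    rw [h, th_discTree] at this
    omega
  have hlt : (0 :: (List.replicate m 0 ++ [ε.toNat])).length - 1 < d + 1 := by simpa using hmd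
  have hle : m + 1 ≤ (0 :: (List.replicate m 0 ++ [0])).length - 1 := by simp
  have hne : ∀ a, List.replicate m 0 ++ [a] ≠ [] := fun _ => by simp
  simp only [Sub.comp, incl_succ_cons _ _ _ _ (hne 0), Tm.var_sub, hS,
    inclPath_discTree_of_lt ε hmd, kappa_singleton_self _ _ (hne _), hS', dim_discTree,
    discSub_unbiasedType_of_lt T _ hlt, discSub_unbiasedType_of_le _ _ hle]
  have hlen : (0 :: (List.replicate m 0 ++ [ε.toNat])).length - 1 = m + 1 := by simp
  have hlast : ((0 :: (List.replicate m 0 ++ [ε.toNat])).getLastD 0 != 0) = ε := by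
    rw [← List.cons_append, List.getLastD_concat]
    cases ε <;> rfl
  rw [hlen, hlast, unbiasedTm_of_ne hbdry, Tm.sub_sub, Tm.sub_sub]
  exact unbiasedCoh_sub_eqv _ _ fun p hp =>
    (wedgeShift_sub_incl_insTree ε m T hk hp.of_bdry).symm

theorem maxEqv_incl_kappa_singleton (hk : k < S.children.length) {d : ℕ}
    (hS : S.children.getD k (.node []) = discTree d) (hT : T.dim ≤ d + 1)
    (hn : (T.th < m + 1 ∧ m + 1 ≤ d + 1) ∨ d + 1 ≤ m + 1) :
    MaxEqv (S.bdry (m + 1)) (Sub.comp (incl ε (m + 1) S) (kappa [k] S T))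
      (Sub.comp (kappa [k] (S.bdry (m + 1)) (T.bdry (m + 1)))
        (incl ε (m + 1) (insTree [k] S T))) := by
  intro p hp
  obtain ⟨i, q, rfl, -, hq⟩ := hp.exists_of_bdry_succ (List.ne_nil_of_length_pos (by omega))
  rcases Nat.lt_trichotomy i k with hi | rfl | hi
  · exact incl_comp_kappa_singleton_of_lt ε m T hk.le hi hq.ne_nil ▸ TmEqv.refl _
  · rw [hS, bdry_discTree] at hq
    by_cases hdm : d ≤ m
    · rw [min_eq_right hdm] at hq
      exact incl_comp_kappa_singleton_self_of_le ε m T hk.le hS hdm hT hq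
    · rw [min_eq_left (by omega)] at hq
      rw [isMaxPath_discTree hq]
      exact incl_comp_kappa_singleton_self_of_lt ε m T hk.le hS (by omega) (by omega)
  · exact incl_comp_kappa_singleton_of_gt ε m T hk.le hi hq.ne_nil ▸ TmEqv.refl _

end InsertionSingleton

theorem compSub_singleton (k j : ℕ) : compSub k [j] = .var [j + k] := by
  cases j <;> rfl

theorem compSub_zero_cons (k : ℕ) {q : Path} (hq : q ≠ []) :
    compSub k (0 :: q) = .var (k :: q) := by
  obtain ⟨a, q, rfl⟩ := List.exists_cons_of_ne_nil hq
  rfl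

theorem susp_sub_compSub_incl (ε : Bool) (n : ℕ) (S : Tree) (k : ℕ) (t : Tm) :
    TmEqv (((t.sub (incl ε (n + 1) (S.children.getD k (.node [])))).susp).sub (compSub k))
      ((t.susp.sub (compSub k)).sub (incl ε (n + 2) S)) := by
  rw [Tm.susp_sub t (by simp [incl]), Tm.sub_sub, Tm.sub_sub]
  refine (TmEqv.refl _).sub fun p hp => ?_
  rcases FvTm.of_susp hp with ⟨j, rfl⟩ | ⟨q, hq, rfl⟩
  · simp only [Sub.comp, suspSub, compSub_singleton, Tm.var_sub, incl_succ_singleton]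
    exact TmEqv.refl _
  · have hr := inclPath_ne_nil ε (n + 1) (S.children.getD k (.node [])) hq
    simp only [Sub.comp, suspSub, incl_eq_var _ _ _ hq, Tm.susp, Tm.var_sub,
      compSub_zero_cons _ hr, compSub_zero_cons _ hq, incl_succ_cons _ _ _ _ hq]
    exact TmEqv.refl _

section InsertionCons

variable (ε : Bool) (m : ℕ) {S T : Tree} {k : ℕ} {P : List ℕ}

theorem incl_comp_kappa_cons_of_ne (hk : k < S.children.length) (hP : P ≠ []) {i : ℕ}
    (hi : i ≠ k) {q : Path} (hq : q ≠ []) :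
    Sub.comp (incl ε (m + 1) S) (kappa (k :: P) S T) (i :: q) =
      Sub.comp (kappa (k :: P) (S.bdry (m + 1)) (T.bdry (m + 1)))
        (incl ε (m + 1) (insTree (k :: P) S T)) (i :: q) := by
  have hchild : (insTree (k :: P) S T).children.getD i (.node []) =
      S.children.getD i (.node []) := by
    rw [children_insTree_cons _ _ hP]
    rcases Nat.lt_or_gt_of_ne hi with hi | hi
    · exact getD_take_append_drop_of_lt _ _ _ hk.le hi
    · simpa using getD_take_append_drop_of_gt _ [_] (.node []) hk.le hi
  simp only [Sub.comp, incl_succ_cons _ _ _ _ hq, Tm.var_sub,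
    kappa_cons_of_ne _ _ hP (inclPath_ne_nil _ _ _ hq) hi, kappa_cons_of_ne _ _ hP hq hi, hchild]

theorem incl_comp_kappa_cons_self (hk : k < S.children.length) (hP : P ≠ []) {q : Path}
    (hq : q ≠ [])
    (ih : TmEqv
      (Sub.comp (incl ε (m + 1) (S.children.getD k (.node [])))
        (kappa P (S.children.getD k (.node [])) (T.children.headD (.node []))) q)
      (Sub.comp (kappa P ((S.children.getD k (.node [])).bdry (m + 1))
          ((T.children.headD (.node [])).bdry (m + 1)))
        (incl ε (m + 1) (insTree P (S.children.getD k (.node []))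
          (T.children.headD (.node [])))) q)) :
    TmEqv (Sub.comp (incl ε (m + 2) S) (kappa (k :: P) S T) (k :: q))
      (Sub.comp (kappa (k :: P) (S.bdry (m + 2)) (T.bdry (m + 2)))
        (incl ε (m + 2) (insTree (k :: P) S T)) (k :: q)) := by
  have hchild : (insTree (k :: P) S T).children.getD k (.node []) =
      insTree P (S.children.getD k (.node [])) (T.children.headD (.node [])) := by
    rw [children_insTree_cons _ _ hP]
    simpa using getD_take_append_drop_add _ [_] (.node []) hk.le (j := 0) (by simp)
  rw [Sub.comp, incl_eq_var _ _ _ hq] at ih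
  simp only [Sub.comp, incl_succ_cons _ _ _ _ hq, Tm.var_sub,
    kappa_cons_self _ _ hP (inclPath_ne_nil _ _ _ hq), kappa_cons_self _ _ hP hq,
    Tree.children_bdry_getD, Tree.children_bdry_headD]
  refine (ih.susp.sub fun p _ => TmEqv.refl _).trans ?_
  rw [← hchild]
  exact susp_sub_compSub_incl ε m _ k _

end InsertionCons

theorem maxEqv_incl_kappa (ε : Bool) {S : Tree} {P : List ℕ} (hbr : IsBranch S P) :
    ∀ {n : ℕ} {T : Tree}, bh P ≤ T.th → T.dim ≤ lh P S →
      ((T.th < n ∧ n ≤ lh P S) ∨ lh P S ≤ n) →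
      MaxEqv (S.bdry n) (Sub.comp (incl ε n S) (kappa P S T))
        (Sub.comp (kappa P (S.bdry n) (T.bdry n)) (incl ε n (insTree P S T))) := by
  induction hbr with
  | here ts k hk hlin =>
    intro n T _ hdim hn
    have hS := (ts.getD k (.node [])).eq_discTree_of_linear hlin
    have hlh : lh [k] (.node ts) = (ts.getD k (.node [])).dim + 1 := by
      rw [lh_singleton, Tree.children_node, hS, maxPath_discTree]
      simp
    rw [hlh] at hdim hn
    obtain ⟨m, rfl⟩ : ∃ m, n = m + 1 := ⟨n - 1, by omega⟩
    exact maxEqv_incl_kappa_singleton ε m T hk hS hdim hn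
  | there ts k P hk hP hbr ih =>
    intro n T hth hdim hn
    rw [bh_cons k hP] at hth
    rw [lh_cons k hP, Tree.children_node] at hdim hn
    obtain ⟨t, rfl⟩ := Tree.exists_eq_node_singleton (T := T) (by omega)
    have hth' : (Tree.node [t]).th = t.th + 1 := by simp [Tree.th]
    have hdim' : (Tree.node [t]).dim = t.dim + 1 := by simp [Tree.dim]
    have hlh := hbr.bh_lt_lh
    obtain ⟨m, rfl⟩ : ∃ m, n = m + 2 := ⟨n - 2, by omega⟩
    have ih' := ih (n := m + 1) (T := t) (by omega) (by omega) (by omega)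
    intro p hp
    obtain ⟨i, q, rfl, -, hq⟩ := hp.exists_of_bdry_succ (List.ne_nil_of_length_pos (by
      rw [Tree.children_node]; omega))
    by_cases hik : i = k
    · subst hik
      exact incl_comp_kappa_cons_self ε m hk hP hq.ne_nil (ih' q hq)
    · exact incl_comp_kappa_cons_of_ne ε (m + 1) (S := .node ts) hk hP hik hq.ne_nil ▸
        TmEqv.refl _

/-- Under the stated conditions, the `n`-boundary commutes
with insertion: `∂ₙ(S)≪∂ₙ(P), ∂ₙ(T)≫ = ∂ₙ(S≪P,T≫)`, and for each `ε`,
`δₙᵉ(S) ∘ κ_{S,P,T} ≡ᵐᵃˣ κ_{∂ₙS,∂ₙP,∂ₙT} ∘ δₙᵉ(S≪P,T≫)`. -/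
theorem insertion_bdry (n : ℕ) (S T : Tree) (P : List ℕ)
    (hbr : IsBranch S P) (hth : bh P ≤ T.th) (hdim : T.dim ≤ lh P S)
    (hn : (T.th < n ∧ n ≤ lh P S) ∨ lh P S ≤ n) :
    insTree P (Tree.bdry n S) (Tree.bdry n T) = Tree.bdry n (insTree P S T) ∧
    (∀ ε : Bool,
      MaxEqv (Tree.bdry n S)
        (Sub.comp (incl ε n S) (kappa P S T))
        (Sub.comp (kappa P (Tree.bdry n S) (Tree.bdry n T))
          (incl ε n (insTree P S T)))) := by
  have hbh : bh P ≤ n := by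
    have := hbr.bh_lt_lh
    omega
  exact ⟨insTree_bdry P n S T hbh, fun ε => maxEqv_incl_kappa ε hbr hth hdim hn⟩

end Catt
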